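/- arXiv:math/0412005 — 2 statements merged into one kernel-verified Lean document; each statement's English description precedes it below -/
import Mathlib

section
/- Let a₁,…,a_R be the R roots (with multiplicity) of the polynomial a^R − a^{R−1} + (1/2!) a^{R−2} − ⋯ + (−1)^R/R! = ∑_{k=0}^{R} (−1)^k a^{R−k}/k!. Then the power sums satisfy: ∑_r a_r = 1, ∑_r a_r^j = 0 for 2 ≤ j ≤ R, and ∑_r a_r^{R+1} = (−1)^{R+1}/R!. -/
/-!
By Vieta's formulas the roots of `∑_{k ≤ R} (-1)^k a^{R-k} / k!` have elementary symmetric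
functions `e_k = 1/k!` for `k ≤ R`, and `e_{R+1} = 0`. Newton's identity
`k e_k = (-1)^(k+1) ∑_{i < k} (-1)^i e_i p_{k-i}` then determines the power sums `p_k`
inductively: once `p_1 = e_1 = 1` and `p_m = 0` for `2 ≤ m < k`, only the terms `i = k - 1` and
`i = 0` survive, giving `k e_k = e_{k-1} + (-1)^(k+1) p_k`. Since `k / k! = 1/(k-1)!` this forces
`p_k = 0` for `k ≤ R`, while `e_{R+1} = 0` gives `p_{R+1} = (-1)^(R+1) / R!`.
-/

open Polynomial Finset

open scoped Nat

theorem Nat.cast_mul_inv_factorial_succ {K : Type*} [Field K] [CharZero K] (j : ℕ) :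
    ((j + 1 : ℕ) : K) * ((j + 1)! : K)⁻¹ = (j ! : K)⁻¹ := by
  rw [Nat.factorial_succ, Nat.cast_mul, mul_inv, ← mul_assoc,
    mul_inv_cancel₀ (Nat.cast_ne_zero.mpr j.succ_ne_zero), one_mul]

namespace Multiset

variable {A : Type*}

theorem mul_esymm_eq_sum [CommRing A] (s : Multiset A) (k : ℕ) :
    k * s.esymm k = (-1) ^ (k + 1) * ∑ a ∈ HasAntidiagonal.antidiagonal k with a.1 < k,
      (-1) ^ a.1 * s.esymm a.1 * (s.map (· ^ a.2)).sum := by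
  have hs : (univ.val.map s.toList.get : Multiset A) = s := by
    rw [Fin.univ_val_map, List.ofFn_get, coe_toList]
  have h := congrArg (MvPolynomial.aeval s.toList.get) (MvPolynomial.mul_esymm_eq_sum _ A k)
  simp only [map_mul, map_pow, map_neg, map_one, map_natCast, map_sum,
    MvPolynomial.aeval_esymm_eq_multiset_esymm, MvPolynomial.psum, MvPolynomial.aeval_X, hs] at h
  convert h using 6
  conv_lhs => rw [← hs, map_map]
  rfl

theorem esymm_zero [CommSemiring A] (s : Multiset A) : s.esymm 0 = 1 := by
  simp [esymm]

theorem esymm_one [CommSemiring A] (s : Multiset A) : s.esymm 1 = s.sum := by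
  simp [esymm, powersetCard_one]

theorem esymm_eq_zero_of_card_lt [CommSemiring A] {s : Multiset A} {k : ℕ}
    (h : card s < k) : s.esymm k = 0 := by
  simp [esymm, powersetCard_eq_empty _ h]

theorem mul_esymm_eq_esymm_sub_one_add_sum_map_pow [CommRing A]
    {s : Multiset A} {k : ℕ} (hk : 2 ≤ k) (h1 : s.sum = 1)
    (h0 : ∀ m, 2 ≤ m → m < k → (s.map (· ^ m)).sum = 0) :
    k * s.esymm k = s.esymm (k - 1) + (-1) ^ (k + 1) * (s.map (· ^ k)).sum := by
  rw [s.mul_esymm_eq_sum, Finset.sum_eq_add_of_mem (k - 1, 1) (0, k)]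
  · have hsign : (-1 : A) ^ (k + 1) * (-1) ^ (k - 1) = 1 := by
      rw [← pow_add, show k + 1 + (k - 1) = 2 * k by omega, pow_mul]
      simp
    simp only [pow_one, map_id', h1, pow_zero, esymm_zero]
    linear_combination s.esymm (k - 1) * hsign
  · simp only [Finset.mem_filter, HasAntidiagonal.mem_antidiagonal]; omega
  · simp only [Finset.mem_filter, HasAntidiagonal.mem_antidiagonal]; omega
  · simp only [ne_eq, Prod.mk.injEq]; omega
  · rintro ⟨i, m⟩ hc hne
    simp only [Finset.mem_filter, HasAntidiagonal.mem_antidiagonal] at hc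
    simp only [ne_eq, Prod.mk.injEq] at hne
    rw [h0 m (by omega) (by omega), mul_zero]

section TruncatedExponential

variable {K : Type*} [Field K] {s : Multiset K} {R : ℕ}

theorem sum_eq_one_of_esymm_eq_inv_factorial (hR : 1 ≤ R)
    (he : ∀ j ≤ R, s.esymm j = (j ! : K)⁻¹) : s.sum = 1 := by
  simpa [← s.esymm_one] using he 1 hR

theorem sum_map_pow_eq_zero_of_esymm_eq_inv_factorial [CharZero K] (hR : 1 ≤ R)
    (he : ∀ j ≤ R, s.esymm j = (j ! : K)⁻¹) {j : ℕ} (hj : 2 ≤ j) (hjR : j ≤ R) :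
    (s.map (· ^ j)).sum = 0 := by
  induction j using Nat.strong_induction_on with
  | _ j ih =>
    have newton := s.mul_esymm_eq_esymm_sub_one_add_sum_map_pow hj
      (s.sum_eq_one_of_esymm_eq_inv_factorial hR he)
      fun m hm2 hmj => ih m hmj hm2 (by omega)
    obtain ⟨i, rfl⟩ : ∃ i, j = i + 1 := ⟨j - 1, by omega⟩
    rw [he _ hjR, Nat.cast_mul_inv_factorial_succ, Nat.add_sub_cancel, he i (by omega),
      left_eq_add] at newton
    simpa using newton

theorem sum_map_pow_card_succ_of_esymm_eq_inv_factorial [CharZero K] (hR : 1 ≤ R)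
    (hcard : card s = R) (he : ∀ j ≤ R, s.esymm j = (j ! : K)⁻¹) :
    (s.map (· ^ (R + 1))).sum = (-1) ^ (R + 1) / R ! := by
  have newton := s.mul_esymm_eq_esymm_sub_one_add_sum_map_pow (by omega : 2 ≤ R + 1)
    (s.sum_eq_one_of_esymm_eq_inv_factorial hR he)
    fun m hm2 hmR => s.sum_map_pow_eq_zero_of_esymm_eq_inv_factorial hR he hm2 (by omega)
  rw [esymm_eq_zero_of_card_lt (by omega), Nat.add_sub_cancel, he R le_rfl] at newton
  have hsq : ((-1 : K) ^ (R + 1 + 1)) ^ 2 = 1 := by rw [← pow_mul, mul_comm, pow_mul]; simp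
  linear_combination (-(-1 : K) ^ (R + 1 + 1)) * newton - (s.map (· ^ (R + 1))).sum * hsq

end TruncatedExponential

end Multiset

namespace Polynomial

variable (K : Type*) [Field K] (R : ℕ)

/-- `X ^ R * ∑_{k ≤ R} (-1 / X) ^ k / k!`, the reflection of the degree-`R` Taylor polynomial
of `exp (-X)`. -/
noncomputable def truncExpPoly : K[X] :=
  ∑ k ∈ range (R + 1), C ((-1 : K) ^ k / (k ! : K)) * X ^ (R - k)

theorem coeff_truncExpPoly_sub {j : ℕ} (hj : j ≤ R) :
    (truncExpPoly K R).coeff (R - j) = (-1) ^ j / j ! := by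
  rw [truncExpPoly, finsetSum_coeff, Finset.sum_eq_single j]
  · simp
  · intro k hk hkj
    rw [coeff_C_mul, coeff_X_pow, if_neg (by rw [mem_range] at hk; omega), mul_zero]
  · intro hj'
    exact absurd (mem_range.mpr (by omega)) hj'

theorem natDegree_truncExpPoly_le : (truncExpPoly K R).natDegree ≤ R :=
  natDegree_sum_le_of_forall_le _ _ fun k _ =>
    (natDegree_C_mul_le _ _).trans ((natDegree_X_pow _).le.trans (Nat.sub_le R k))

theorem coeff_truncExpPoly_self : (truncExpPoly K R).coeff R = 1 := by
  simpa using coeff_truncExpPoly_sub K R (Nat.zero_le R)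

theorem monic_truncExpPoly : (truncExpPoly K R).Monic :=
  monic_of_natDegree_le_of_coeff_eq_one R (natDegree_truncExpPoly_le K R)
    (coeff_truncExpPoly_self K R)

theorem natDegree_truncExpPoly : (truncExpPoly K R).natDegree = R :=
  natDegree_eq_of_le_of_coeff_ne_zero (natDegree_truncExpPoly_le K R)
    (by rw [coeff_truncExpPoly_self]; exact one_ne_zero)

theorem card_roots_truncExpPoly [IsAlgClosed K] :
    Multiset.card (truncExpPoly K R).roots = R := by
  rw [IsAlgClosed.card_roots_eq_natDegree, natDegree_truncExpPoly]

theorem esymm_roots_truncExpPoly [IsAlgClosed K] {j : ℕ} (hj : j ≤ R) :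
    (truncExpPoly K R).roots.esymm j = (j ! : K)⁻¹ := by
  have vieta := coeff_eq_esymm_roots_of_card (IsAlgClosed.card_roots_eq_natDegree)
    (k := R - j) ((Nat.sub_le R j).trans (natDegree_truncExpPoly K R).ge)
  rw [(monic_truncExpPoly K R).leadingCoeff, natDegree_truncExpPoly, Nat.sub_sub_self hj,
    coeff_truncExpPoly_sub K R hj, one_mul, div_eq_mul_inv] at vieta
  exact (mul_left_cancel₀ (pow_ne_zero j (neg_ne_zero.mpr one_ne_zero)) vieta).symm

end Polynomial

/-- Power sums of the roots of the truncated exponential polynomial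
`∑_{k=0}^{R} (−1)^k a^{R−k}/k!`. -/
theorem power_sums_of_truncated_exponential_roots
    (R : ℕ) (hR : 1 ≤ R)
    (p : Polynomial ℂ)
    (hp : p = ∑ k ∈ Finset.range (R + 1),
        Polynomial.C ((-1 : ℂ)^k / (Nat.factorial k : ℂ)) * Polynomial.X ^ (R - k)) :
    (p.roots.map (fun a => a)).sum = 1 ∧
    (∀ j : ℕ, 2 ≤ j → j ≤ R → (p.roots.map (fun a => a ^ j)).sum = 0) ∧
    (p.roots.map (fun a => a ^ (R + 1))).sum = (-1 : ℂ)^(R + 1) / (Nat.factorial R : ℂ) := by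
  obtain rfl : p = truncExpPoly ℂ R := hp
  have he (j : ℕ) (hj : j ≤ R) : (truncExpPoly ℂ R).roots.esymm j = (j ! : ℂ)⁻¹ :=
    esymm_roots_truncExpPoly ℂ R hj
  refine ⟨?_, fun j => Multiset.sum_map_pow_eq_zero_of_esymm_eq_inv_factorial hR he,
    Multiset.sum_map_pow_card_succ_of_esymm_eq_inv_factorial hR (card_roots_truncExpPoly ℂ R) he⟩
  simpa using Multiset.sum_eq_one_of_esymm_eq_inv_factorial hR he
end

section
/- Let ρ = (1 − Kχ)^{-1} in a ring and R = ρK. If [D, K] = −u v (where u, v are elements, thought of as a rank-one product φ⊗ψ) and [D, χ] = δ, then [D, R] = −(ρu)(v(1+χR)) + RδR. In the notation Q = ρu and P = v(1+χR), this reads [D, R] = −QP + RδR. -/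
/-- Equation (L1): if `ρ = (1 − Kχ)⁻¹`, `R = ρK`, `[D, K] = −uv` and
`[D, χ] = δ`, then `[D, R] = −QP + RδR` where `Q = ρu`, `P = v(1 + χR)`. -/
theorem commutator_D_R
    {Rng : Type*} [Ring Rng] (K χ ρ R D u v δ : Rng)
    (hρ₁ : ρ * (1 - K * χ) = 1) (hρ₂ : (1 - K * χ) * ρ = 1)
    (hR : R = ρ * K)
    (hDK : D * K - K * D = -(u * v)) (hDχ : D * χ - χ * D = δ) :
    D * R - R * D = -((ρ * u) * (v * (1 + χ * R))) + R * δ * R := by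
  have h1 : D * K = -(u * v) + K * D := eq_add_of_sub_eq hDK
  have h2 : D * χ = δ + χ * D := eq_add_of_sub_eq hDχ
  have key : D * (K * χ) - (K * χ) * D = K * δ - u * v * χ := by
    calc D * (K * χ) - (K * χ) * D = (D * K) * χ - K * χ * D := by noncomm_ring
      _ = (-(u * v) + K * D) * χ - K * χ * D := by rw [h1]
      _ = K * (D * χ) - u * v * χ - K * χ * D := by noncomm_ring
      _ = K * (δ + χ * D) - u * v * χ - K * χ * D := by rw [h2]
      _ = K * δ - u * v * χ := by noncomm_ring
  have hDρ : D * ρ - ρ * D = ρ * (K * δ - u * v * χ) * ρ := by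
    calc D * ρ - ρ * D
        = ρ * (1 - K * χ) * (D * ρ) - (ρ * D) * ((1 - K * χ) * ρ) := by
          rw [hρ₁, hρ₂, one_mul, mul_one]
      _ = ρ * (D * (K * χ) - (K * χ) * D) * ρ := by noncomm_ring
      _ = ρ * (K * δ - u * v * χ) * ρ := by rw [key]
  have hDρ' : D * ρ = ρ * (K * δ - u * v * χ) * ρ + ρ * D := eq_add_of_sub_eq hDρ
  subst hR
  calc D * (ρ * K) - ρ * K * D
      = (ρ * (K * δ - u * v * χ) * ρ + ρ * D) * K - ρ * K * D := by
        rw [← mul_assoc, hDρ']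
    _ = ρ * (K * δ - u * v * χ) * ρ * K + ρ * (D * K) - ρ * (K * D) := by noncomm_ring
    _ = ρ * (K * δ - u * v * χ) * ρ * K + ρ * (-(u * v) + K * D) - ρ * (K * D) := by
        rw [h1]
    _ = -((ρ * u) * (v * (1 + χ * (ρ * K)))) + (ρ * K) * δ * (ρ * K) := by noncomm_ring
end
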